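/- Let J be an n × m real matrix and v a Rademacher random vector in ℝᵐ. Then E[‖J v‖²] = ‖J‖_F² = trace(JᵀJ), and ‖Jv‖² − trace(JᵀJ) = ∑_{i≠j} vᵢvⱼ⟨Jᵢ,Jⱼ⟩, so Var[‖Jv‖²] = 2∑_{i≠j} ⟨Jᵢ,Jⱼ⟩², which equals (up to factor 2) the OroJaR penalty on J. -/
import Mathlib


open Matrix

/-- The sign associated to a Boolean: `true ↦ 1`, `false ↦ -1`. -/
noncomputable def sgn (b : Bool) : ℝ := if b then 1 else -1

/-- Expectation of a function of an i.i.d. Rademacher vector. -/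
noncomputable def expectR (m : ℕ) (f : (Fin m → Bool) → ℝ) : ℝ :=
  (∑ s : Fin m → Bool, f s) / 2 ^ m

/-- Variance of a function of an i.i.d. Rademacher vector. -/
noncomputable def varR (m : ℕ) (f : (Fin m → Bool) → ℝ) : ℝ :=
  expectR m (fun s => (f s - expectR m f) ^ 2)

lemma sgn_mul_self (b : Bool) : sgn b * sgn b = 1 := by cases b <;> simp [sgn]

lemma prod_single (m : ℕ) (s : Fin m → Bool) (i : Fin m) :
    (∏ t, sgn (s t) ^ (if t = i then 1 else 0)) = sgn (s i) := by
  simp [pow_ite]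

lemma sum_sgn_pow (m : ℕ) (e : Fin m → ℕ) :
    ∑ s : Fin m → Bool, ∏ t, sgn (s t) ^ e t
      = if ∀ t, Even (e t) then (2:ℝ)^m else 0 := by
  have h1 : (∏ t : Fin m, ∑ b : Bool, sgn b ^ e t)
      = ∑ s : Fin m → Bool, ∏ t, sgn (s t) ^ e t := by
    rw [Finset.prod_univ_sum]
    rw [Fintype.piFinset_univ]
  rw [← h1]
  have h2 : ∀ t : Fin m, (∑ b : Bool, sgn b ^ e t) = if Even (e t) then 2 else 0 := by
    intro t
    rw [Fintype.sum_bool]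
    by_cases h : Even (e t)
    · simp [sgn, h, h.neg_one_pow]; norm_num
    · simp [sgn, h, (Nat.not_even_iff_odd.mp h).neg_one_pow]
  simp only [h2]
  by_cases h : ∀ t : Fin m, Even (e t)
  · simp [h, Finset.prod_ite_eq, Finset.prod_const]
  · push_neg at h
    obtain ⟨t, ht⟩ := h
    rw [if_neg, Finset.prod_eq_zero (Finset.mem_univ t)]
    · simp [ht]
    · push_neg; exact ⟨t, ht⟩

lemma moment2 (m : ℕ) (i j : Fin m) :
    ∑ s : Fin m → Bool, sgn (s i) * sgn (s j) = if i = j then (2:ℝ)^m else 0 := by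
  have key : ∀ s : Fin m → Bool, sgn (s i) * sgn (s j)
      = ∏ t, sgn (s t) ^ ((if t = i then 1 else 0) + (if t = j then 1 else 0)) := by
    intro s
    simp only [pow_add, Finset.prod_mul_distrib, prod_single]
  simp only [key]
  rw [sum_sgn_pow]
  by_cases h : i = j
  · subst h
    rw [if_pos rfl, if_pos]
    intro t; by_cases ht : t = i <;> simp [ht]
  · rw [if_neg h, if_neg]
    intro hC
    have := hC i
    simp [h, Nat.even_iff] at this

lemma moment4 (m : ℕ) {i j k l : Fin m} (hij : i ≠ j) (hkl : k ≠ l) :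
    ∑ s : Fin m → Bool, sgn (s i) * sgn (s j) * (sgn (s k) * sgn (s l))
      = if (i = k ∧ j = l) ∨ (i = l ∧ j = k) then (2:ℝ)^m else 0 := by
  have key : ∀ s : Fin m → Bool, sgn (s i) * sgn (s j) * (sgn (s k) * sgn (s l))
      = ∏ t, sgn (s t) ^ ((if t = i then 1 else 0) + (if t = j then 1 else 0)
          + ((if t = k then 1 else 0) + (if t = l then 1 else 0))) := by
    intro s
    simp only [pow_add, Finset.prod_mul_distrib, prod_single]
  simp only [key]
  rw [sum_sgn_pow]
  by_cases h : (i = k ∧ j = l) ∨ (i = l ∧ j = k)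
  · rw [if_pos h, if_pos]
    intro t
    rcases h with ⟨rfl, rfl⟩ | ⟨rfl, rfl⟩ <;>
      by_cases h1 : t = i <;> by_cases h2 : t = j <;>
        simp_all [Nat.even_iff]
  · rw [if_neg h, if_neg]
    intro hC
    apply h
    have hi := hC i
    have hj := hC j
    simp only [if_pos rfl, if_neg hij, if_neg (Ne.symm hij)] at hi hj
    rw [Nat.even_iff] at hi hj
    by_cases h1 : i = k <;> by_cases h2 : i = l <;>
      by_cases h3 : j = k <;> by_cases h4 : j = l <;>
        simp_all [Nat.even_iff]

lemma expand_sq (n m : ℕ) (J : Matrix (Fin n) (Fin m) ℝ) (s : Fin m → Bool) :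
    (∑ k, (∑ i, J k i * sgn (s i)) ^ 2)
      = ∑ i, ∑ j, sgn (s i) * sgn (s j) * ∑ k, J k i * J k j := by
  simp only [sq, Finset.sum_mul_sum, Finset.sum_mul, Finset.mul_sum]
  conv_lhs => rw [Finset.sum_comm]
  refine Finset.sum_congr rfl fun i _ => ?_
  conv_lhs => rw [Finset.sum_comm]
  refine Finset.sum_congr rfl fun j _ => ?_
  refine Finset.sum_congr rfl fun k _ => ?_
  ring

lemma csymm (n m : ℕ) (J : Matrix (Fin n) (Fin m) ℝ) (i j : Fin m) :
    (∑ k, J k j * J k i) = ∑ k, J k i * J k j :=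
  Finset.sum_congr rfl fun k _ => mul_comm _ _

lemma innerSumAux (n m : ℕ) (J : Matrix (Fin n) (Fin m) ℝ) (i j p q : Fin m) :
    ∑ s : Fin m → Bool,
        (if i ≠ j then sgn (s i) * sgn (s j) * ∑ k, J k i * J k j else 0)
          * (if p ≠ q then sgn (s p) * sgn (s q) * ∑ k, J k p * J k q else 0)
      = if i ≠ j then
          (2:ℝ)^m * ((∑ k, J k i * J k j) * (∑ k, J k i * J k j))
            * ((if p = i ∧ q = j then 1 else 0) + (if p = j ∧ q = i then 1 else 0))
        else 0 := by
  by_cases hij : i = j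
  · simp [hij]
  · by_cases hpq : p = q
    · subst hpq
      have e1 : ¬(p = i ∧ p = j) := fun h => hij (h.1.symm.trans h.2)
      have e2 : ¬(p = j ∧ p = i) := fun h => hij (h.2.symm.trans h.1)
      simp [e1, e2, hij]
    · rw [if_pos hij]
      have key : ∀ s : Fin m → Bool,
          (if i ≠ j then sgn (s i) * sgn (s j) * ∑ k, J k i * J k j else 0)
            * (if p ≠ q then sgn (s p) * sgn (s q) * ∑ k, J k p * J k q else 0)
          = sgn (s i) * sgn (s j) * (sgn (s p) * sgn (s q))
              * ((∑ k, J k i * J k j) * (∑ k, J k p * J k q)) := by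
        intro s
        rw [if_pos hij, if_pos hpq]; ring
      simp only [key]
      rw [← Finset.sum_mul, moment4 m hij hpq]
      by_cases h1 : p = i ∧ q = j
      · obtain ⟨h1p, h1q⟩ := h1
        have hne2 : ¬(p = j ∧ q = i) := fun h => hij (h1p.symm.trans h.1)
        rw [if_pos (Or.inl ⟨h1p.symm, h1q.symm⟩), if_pos ⟨h1p, h1q⟩, if_neg hne2,
          h1p, h1q]
        ring
      · by_cases h2 : p = j ∧ q = i
        · obtain ⟨h2p, h2q⟩ := h2
          rw [if_pos (Or.inr ⟨h2q.symm, h2p.symm⟩), if_neg h1, if_pos ⟨h2p, h2q⟩,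
            h2p, h2q, csymm]
          ring
        · rw [if_neg, if_neg h1, if_neg h2]
          · ring
          · rintro (⟨hi, hj⟩ | ⟨hi, hj⟩)
            · exact h1 ⟨hi.symm, hj.symm⟩
            · exact h2 ⟨hj.symm, hi.symm⟩

theorem rademacher_jacobian_norm_variance (n m : ℕ)
    (J : Matrix (Fin n) (Fin m) ℝ) :
    expectR m (fun s => ∑ k, (∑ i, J k i * sgn (s i)) ^ 2) =
        (∑ k, ∑ i, J k i ^ 2) ∧
      (∑ k, ∑ i, J k i ^ 2) = (Jᵀ * J).trace ∧
      (∀ s : Fin m → Bool,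
        (∑ k, (∑ i, J k i * sgn (s i)) ^ 2) - (Jᵀ * J).trace =
          ∑ i, ∑ j, if i ≠ j then sgn (s i) * sgn (s j) * ∑ k, J k i * J k j else 0) ∧
      varR m (fun s => ∑ k, (∑ i, J k i * sgn (s i)) ^ 2) =
        2 * ∑ i, ∑ j, if i ≠ j then (∑ k, J k i * J k j) ^ 2 else 0 := by
  have hpow : ((2:ℝ)^m) ≠ 0 := by positivity
  -- the sum over all sign vectors of the squared norm
  have hEsum : (∑ s : Fin m → Bool, ∑ k, (∑ i, J k i * sgn (s i)) ^ 2)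
      = 2^m * ∑ k, ∑ i, J k i ^ 2 := by
    calc (∑ s : Fin m → Bool, ∑ k, (∑ i, J k i * sgn (s i)) ^ 2)
        = ∑ s : Fin m → Bool, ∑ i, ∑ j, sgn (s i) * sgn (s j) * ∑ k, J k i * J k j :=
          Finset.sum_congr rfl fun s _ => expand_sq n m J s
      _ = ∑ i, ∑ j, (∑ s : Fin m → Bool, sgn (s i) * sgn (s j)) * ∑ k, J k i * J k j := by
          conv_lhs => rw [Finset.sum_comm]
          refine Finset.sum_congr rfl fun i _ => ?_
          conv_lhs => rw [Finset.sum_comm]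
          refine Finset.sum_congr rfl fun j _ => ?_
          rw [Finset.sum_mul]
      _ = ∑ i, ∑ j, (if i = j then (2:ℝ)^m else 0) * ∑ k, J k i * J k j := by
          simp only [moment2]
      _ = ∑ i : Fin m, (2:ℝ)^m * ∑ k, J k i * J k i := by
          simp [ite_mul, Finset.sum_ite_eq]
      _ = 2^m * ∑ k, ∑ i, J k i ^ 2 := by
          rw [← Finset.mul_sum]
          congr 1
          rw [Finset.sum_comm]
          simp [sq]
  have part1 : expectR m (fun s => ∑ k, (∑ i, J k i * sgn (s i)) ^ 2)
      = ∑ k, ∑ i, J k i ^ 2 := by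
    unfold expectR
    rw [hEsum, mul_div_cancel_left₀ _ hpow]
  have part2 : (∑ k, ∑ i, J k i ^ 2) = (Jᵀ * J).trace := by
    rw [Finset.sum_comm]
    simp [Matrix.trace, Matrix.mul_apply, Matrix.diag, sq]
  have hdiag : (Jᵀ * J).trace = ∑ i : Fin m, ∑ k, J k i * J k i := by
    simp [Matrix.trace, Matrix.mul_apply, Matrix.diag]
  have part3 : ∀ s : Fin m → Bool,
      (∑ k, (∑ i, J k i * sgn (s i)) ^ 2) - (Jᵀ * J).trace =
        ∑ i, ∑ j, if i ≠ j then sgn (s i) * sgn (s j) * ∑ k, J k i * J k j else 0 := by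
    intro s
    rw [expand_sq n m J s, hdiag]
    have hsplit : (∑ i, ∑ j, sgn (s i) * sgn (s j) * ∑ k, J k i * J k j)
        = (∑ i, ∑ j, if i ≠ j then sgn (s i) * sgn (s j) * ∑ k, J k i * J k j else 0)
          + ∑ i : Fin m, ∑ k, J k i * J k i := by
      rw [← Finset.sum_add_distrib]
      refine Finset.sum_congr rfl fun i _ => ?_
      have h2 : (∑ k, J k i * J k i)
          = ∑ j, if j = i then (∑ k, J k i * J k j) else 0 := by
        simp [Finset.sum_ite_eq']
      rw [h2, ← Finset.sum_add_distrib]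
      refine Finset.sum_congr rfl fun j _ => ?_
      by_cases h : i = j
      · subst h; simp [sgn_mul_self]
      · simp [h, Ne.symm h]
    rw [hsplit]; ring
  refine ⟨part1, part2, part3, ?_⟩
  -- variance
  have hEf : expectR m (fun s => ∑ k, (∑ i, J k i * sgn (s i)) ^ 2) = (Jᵀ * J).trace :=
    part1.trans part2
  have hvar : (∑ s : Fin m → Bool,
      (∑ i, ∑ j, if i ≠ j then sgn (s i) * sgn (s j) * ∑ k, J k i * J k j else 0) ^ 2)
      = 2^m * (2 * ∑ i, ∑ j, if i ≠ j then (∑ k, J k i * J k j) ^ 2 else 0) := by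
    calc (∑ s : Fin m → Bool,
        (∑ i, ∑ j, if i ≠ j then sgn (s i) * sgn (s j) * ∑ k, J k i * J k j else 0) ^ 2)
        = ∑ s : Fin m → Bool, ∑ i, ∑ p, ∑ j, ∑ q,
            (if i ≠ j then sgn (s i) * sgn (s j) * ∑ k, J k i * J k j else 0)
              * (if p ≠ q then sgn (s p) * sgn (s q) * ∑ k, J k p * J k q else 0) := by
          refine Finset.sum_congr rfl fun s _ => ?_
          rw [sq, Finset.sum_mul_sum]
          refine Finset.sum_congr rfl fun i _ => ?_
          refine Finset.sum_congr rfl fun p _ => ?_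
          rw [Finset.sum_mul_sum]
      _ = ∑ i, ∑ p, ∑ j, ∑ q, ∑ s : Fin m → Bool,
            (if i ≠ j then sgn (s i) * sgn (s j) * ∑ k, J k i * J k j else 0)
              * (if p ≠ q then sgn (s p) * sgn (s q) * ∑ k, J k p * J k q else 0) := by
          conv_lhs => rw [Finset.sum_comm]
          refine Finset.sum_congr rfl fun i _ => ?_
          conv_lhs => rw [Finset.sum_comm]
          refine Finset.sum_congr rfl fun p _ => ?_
          conv_lhs => rw [Finset.sum_comm]
          refine Finset.sum_congr rfl fun j _ => ?_
          conv_lhs => rw [Finset.sum_comm]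
      _ = ∑ i, ∑ p, ∑ j, ∑ q,
            (if i ≠ j then
              (2:ℝ)^m * ((∑ k, J k i * J k j) * (∑ k, J k i * J k j))
                * ((if p = i ∧ q = j then 1 else 0) + (if p = j ∧ q = i then 1 else 0))
            else 0) := by
          refine Finset.sum_congr rfl fun i _ => Finset.sum_congr rfl fun p _ =>
            Finset.sum_congr rfl fun j _ => Finset.sum_congr rfl fun q _ => ?_
          exact innerSumAux n m J i j p q
      _ = ∑ i, ∑ j, ∑ p, ∑ q,
            (if i ≠ j then
              (2:ℝ)^m * ((∑ k, J k i * J k j) * (∑ k, J k i * J k j))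
                * ((if p = i ∧ q = j then 1 else 0) + (if p = j ∧ q = i then 1 else 0))
            else 0) := by
          refine Finset.sum_congr rfl fun i _ => ?_
          rw [Finset.sum_comm]
      _ = ∑ i, ∑ j, (if i ≠ j then
            (2:ℝ)^m * ((∑ k, J k i * J k j) * (∑ k, J k i * J k j)) * 2 else 0) := by
          refine Finset.sum_congr rfl fun i _ => Finset.sum_congr rfl fun j _ => ?_
          by_cases hij : i ≠ j
          · rw [if_pos hij]
            have hsum2 : (∑ p : Fin m, ∑ q : Fin m,
                ((if p = i ∧ q = j then (1:ℝ) else 0) + (if p = j ∧ q = i then 1 else 0))) = 2 := by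
              simp [Finset.sum_add_distrib, ite_and, Finset.sum_ite_eq']
              norm_num
            simp only [if_pos hij, ← Finset.mul_sum]
            rw [hsum2]
          · rw [if_neg hij]
            simp [hij]
      _ = 2^m * (2 * ∑ i, ∑ j, if i ≠ j then (∑ k, J k i * J k j) ^ 2 else 0) := by
          rw [Finset.mul_sum, Finset.mul_sum]
          refine Finset.sum_congr rfl fun i _ => ?_
          rw [Finset.mul_sum, Finset.mul_sum]
          refine Finset.sum_congr rfl fun j _ => ?_
          by_cases h : i ≠ j
          · rw [if_pos h, if_pos h]; ring
          · rw [if_neg h, if_neg h]; ring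
  unfold varR
  have hfun : (fun s : Fin m → Bool =>
      ((∑ k, (∑ i, J k i * sgn (s i)) ^ 2)
        - expectR m (fun s => ∑ k, (∑ i, J k i * sgn (s i)) ^ 2)) ^ 2)
      = fun s : Fin m → Bool =>
        (∑ i, ∑ j, if i ≠ j then sgn (s i) * sgn (s j) * ∑ k, J k i * J k j else 0) ^ 2 := by
    funext s
    rw [hEf, part3 s]
  rw [hfun]
  unfold expectR
  rw [hvar, mul_div_cancel_left₀ _ hpow]
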